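/- arXiv:1005.1210 — 2 statements merged into one kernel-verified Lean document; each statement's English description precedes it below -/
import Mathlib

section
/- Let 1/2 < α ≤ 1, δ > 0, ε ≥ 0, and let N be an odd positive integer with N^{2α−1} > 32/δ². Let A ⊆ {0, 1, …, N−1} with |A| = δ·N^α, and let M_A = A ∩ [N/3, 2N/3) satisfy |M_A| ≥ (δ/4)·N^α. Suppose that the discrete Fourier coefficients of the characteristic function of A satisfy |χ̂_A(k)| ≤ (δ²/32)·N^{2α−2−ε} for every k with 1 ≤ k ≤ N−1. Then A contains a nontrivial 3-term arithmetic progression in ℤ: there exist x, y, z ∈ A, not all equal, with x + y = 2z. -/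
open Complex Real Finset

/-- Discrete Fourier coefficient of the characteristic function of a finite set
`A ⊆ {0, …, N-1}`. -/
noncomputable def finsetFourier (N : ℕ) (A : Finset ℕ) (k : ℤ) : ℂ :=
  (N : ℂ)⁻¹ * ∑ n ∈ Finset.range N,
    (if n ∈ A then (1 : ℂ) else 0) *
      Complex.exp (-(2 * Real.pi * Complex.I * k * n) / N)

/-!
With `e_B(k) = ∑_{b ∈ B} ζ^{kb}` for a primitive `N`-th root of unity `ζ`, orthogonality gives
`N · #{(x, y, z) ∈ M × A × M : x + y ≡ 2z (mod N)} = ∑_{k < N} e_M(k) e_A(k) e_M(-2k)`.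
The frequency `k = 0` contributes `|M|²|A|`; the others are bounded by `max_{k ≠ 0} |e_A(k)|`
times `∑_k |e_M(k)| |e_M(-2k)| ≤ N|M|` (Cauchy–Schwarz and Parseval, the latter applying to
`k ↦ -2k` because `N` is odd). The hypotheses then leave more than `|M|` triples, so one lies off
the diagonal `x = y = z`, and since `x` and `z` lie in the middle third, `|x + y - 2z| < N`
turns the congruence into an equality in `ℤ`.
-/

open ComplexConjugate

theorem IsPrimitiveRoot.sum_range_zpow_mul {R : Type*} [Field R] {ζ : R} {N : ℕ}
    (hζ : IsPrimitiveRoot ζ N) (m : ℤ) :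
    ∑ k ∈ range N, ζ ^ ((k : ℤ) * m) = if (N : ℤ) ∣ m then (N : R) else 0 := by
  simp_rw [mul_comm _ m, zpow_mul, zpow_natCast]
  split_ifs with hm
  · simp [(hζ.zpow_eq_one_iff_dvd m).mpr hm]
  · have hm1 : ζ ^ m ≠ 1 := fun h => hm ((hζ.zpow_eq_one_iff_dvd m).mp h)
    rw [geom_sum_eq hm1, ← zpow_natCast, ← zpow_mul, mul_comm, zpow_mul, zpow_natCast,
      hζ.pow_eq_one, one_zpow, sub_self, zero_div]

theorem natCast_dvd_mul_sub_iff {N n m : ℕ} {c : ℤ} (hc : IsCoprime c N) (hn : n < N)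
    (hm : m < N) : (N : ℤ) ∣ c * (n - m) ↔ n = m := by
  refine ⟨fun h => ?_, fun h => by simp [h]⟩
  have hdvd : (N : ℤ) ∣ (n : ℤ) - m := hc.symm.dvd_of_dvd_mul_left h
  have := Int.eq_zero_of_abs_lt_dvd hdvd (by rw [abs_lt]; omega)
  omega

noncomputable def expSum (ζ : ℂ) (B : Finset ℕ) (k : ℤ) : ℂ := ∑ n ∈ B, ζ ^ (k * n)

def threeAPsMod (N : ℕ) (X Y Z : Finset ℕ) : Finset (ℕ × ℕ × ℕ) :=
  {p ∈ X ×ˢ Y ×ˢ Z | (N : ℤ) ∣ p.1 + p.2.1 - 2 * p.2.2}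

section

variable {ζ : ℂ} {N : ℕ}

theorem IsPrimitiveRoot.conj_zpow (hζ : IsPrimitiveRoot ζ N) (hN : N ≠ 0) (j : ℤ) :
    conj (ζ ^ j) = ζ ^ (-j) := by
  rw [map_zpow₀, ← Complex.inv_eq_conj (hζ.norm'_eq_one hN), inv_zpow']

theorem conj_expSum (hζ : IsPrimitiveRoot ζ N) (hN : N ≠ 0) (B : Finset ℕ) (k : ℤ) :
    conj (expSum ζ B k) = expSum ζ B (-k) := by
  simp only [expSum, map_sum, hζ.conj_zpow hN, neg_mul]

theorem norm_expSum_neg (hζ : IsPrimitiveRoot ζ N) (hN : N ≠ 0) (B : Finset ℕ) (k : ℤ) :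
    ‖expSum ζ B (-k)‖ = ‖expSum ζ B k‖ := by
  rw [← conj_expSum hζ hN, Complex.norm_conj]

theorem sum_range_norm_expSum_mul_sq (hζ : IsPrimitiveRoot ζ N) (hN : N ≠ 0) {B : Finset ℕ}
    (hB : B ⊆ range N) {c : ℤ} (hc : IsCoprime c N) :
    ∑ k ∈ range N, ‖expSum ζ B (c * k)‖ ^ 2 = N * #B := by
  have hζ0 : ζ ≠ 0 := hζ.ne_zero hN
  have hexpand : ∀ k : ℕ, expSum ζ B (c * k) * conj (expSum ζ B (c * k)) =
      ∑ n ∈ B, ∑ m ∈ B, ζ ^ ((k : ℤ) * (c * (n - m))) := by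
    intro k
    rw [conj_expSum hζ hN, expSum, expSum, sum_mul_sum]
    refine sum_congr rfl fun n _ => sum_congr rfl fun m _ => ?_
    rw [← zpow_add₀ hζ0]
    ring_nf
  have horth : ∀ n ∈ B, ∀ m ∈ B,
      ∑ k ∈ range N, ζ ^ ((k : ℤ) * (c * (n - m))) = if n = m then (N : ℂ) else 0 := by
    intro n hn m hm
    rw [hζ.sum_range_zpow_mul, if_congr (natCast_dvd_mul_sub_iff hc
      (mem_range.mp (hB hn)) (mem_range.mp (hB hm))) rfl rfl]
  apply Complex.ofReal_injective
  push_cast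
  simp_rw [← Complex.mul_conj', hexpand]
  rw [sum_comm]
  simp_rw [sum_comm (s := range N)]
  rw [sum_congr rfl fun n hn => sum_congr rfl (horth n hn)]
  simp [sum_ite_eq, mul_comm]

theorem natCast_mul_card_threeAPsMod (hζ : IsPrimitiveRoot ζ N) (hN : N ≠ 0)
    (X Y Z : Finset ℕ) :
    (N : ℂ) * #(threeAPsMod N X Y Z) =
      ∑ k ∈ range N, expSum ζ X k * expSum ζ Y k * expSum ζ Z (-2 * k) := by
  have hζ0 : ζ ≠ 0 := hζ.ne_zero hN
  have hexpand : ∀ k : ℕ, expSum ζ X k * expSum ζ Y k * expSum ζ Z (-2 * k) =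
      ∑ p ∈ X ×ˢ Y ×ˢ Z, ζ ^ ((k : ℤ) * (p.1 + p.2.1 - 2 * p.2.2)) := by
    intro k
    rw [mul_assoc, expSum, expSum, expSum, sum_mul_sum Y Z, sum_mul_sum]
    simp only [mul_sum, sum_product]
    refine sum_congr rfl fun x _ => sum_congr rfl fun y _ => sum_congr rfl fun z _ => ?_
    rw [← zpow_add₀ hζ0, ← zpow_add₀ hζ0]
    ring_nf
  simp_rw [hexpand]
  rw [sum_comm]
  simp_rw [hζ.sum_range_zpow_mul]
  rw [sum_ite, sum_const_zero, add_zero, sum_const, nsmul_eq_mul, threeAPsMod, mul_comm]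

theorem sum_range_norm_expSum_mul_norm_expSum_neg_two_mul_le (hζ : IsPrimitiveRoot ζ N)
    (hodd : Odd N) {M : Finset ℕ} (hM : M ⊆ range N) :
    ∑ k ∈ range N, ‖expSum ζ M k‖ * ‖expSum ζ M (-2 * k)‖ ≤ N * #M := by
  have hN : N ≠ 0 := hodd.pos.ne'
  have hcop : IsCoprime (-2 : ℤ) N :=
    (Nat.isCoprime_iff_coprime.mpr (Nat.coprime_two_left.mpr hodd)).neg_left
  have hparseval₁ := sum_range_norm_expSum_mul_sq hζ hN hM isCoprime_one_left
  have hparseval₂ := sum_range_norm_expSum_mul_sq hζ hN hM hcop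
  simp only [one_mul] at hparseval₁
  calc _ ≤ √(∑ k ∈ range N, ‖expSum ζ M k‖ ^ 2) *
          √(∑ k ∈ range N, ‖expSum ζ M (-2 * k)‖ ^ 2) :=
        Real.sum_mul_le_sqrt_mul_sqrt _ _ _
    _ = N * #M := by rw [hparseval₁, hparseval₂, Real.mul_self_sqrt (by positivity)]

theorem abs_natCast_mul_card_threeAPsMod_sub_le (hζ : IsPrimitiveRoot ζ N) (hodd : Odd N)
    {M A : Finset ℕ} (hM : M ⊆ range N) {β : ℝ} (hβ₀ : 0 ≤ β)
    (hβ : ∀ k : ℕ, 0 < k → k < N → ‖expSum ζ A k‖ ≤ β) :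
    |(N : ℝ) * #(threeAPsMod N M A M) - #M * #A * #M| ≤ β * (N * #M) := by
  have hN : N ≠ 0 := hodd.pos.ne'
  set F : ℕ → ℂ := fun k => expSum ζ M k * expSum ζ A k * expSum ζ M (-2 * k)
  have hmain : F 0 = #M * #A * #M := by simp [F, expSum]
  have herror : (((N : ℝ) * #(threeAPsMod N M A M) - #M * #A * #M : ℝ) : ℂ) =
      ∑ k ∈ (range N).erase 0, F k := by
    push_cast
    rw [natCast_mul_card_threeAPsMod hζ hN, ← add_sum_erase _ F (mem_range.mpr hodd.pos),
      hmain, add_sub_cancel_left]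
  calc |(N : ℝ) * #(threeAPsMod N M A M) - #M * #A * #M|
      = ‖∑ k ∈ (range N).erase 0, F k‖ := by
        rw [← herror, Complex.norm_real, Real.norm_eq_abs]
    _ ≤ ∑ k ∈ (range N).erase 0, β * (‖expSum ζ M k‖ * ‖expSum ζ M (-2 * k)‖) := by
      refine (norm_sum_le _ _).trans (sum_le_sum fun k hk => ?_)
      obtain ⟨hk0, hkN⟩ := mem_erase.mp hk
      rw [norm_mul, norm_mul, mul_comm β, mul_right_comm]
      gcongr
      exact hβ k (Nat.pos_of_ne_zero hk0) (mem_range.mp hkN)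
    _ ≤ β * ∑ k ∈ range N, ‖expSum ζ M k‖ * ‖expSum ζ M (-2 * k)‖ := by
      rw [← mul_sum]
      gcongr
      exact erase_subset _ _
    _ ≤ β * (N * #M) := by
      gcongr
      exact sum_range_norm_expSum_mul_norm_expSum_neg_two_mul_le hζ hodd hM

end

theorem finsetFourier_eq_expSum {N : ℕ} {A : Finset ℕ} (hA : A ⊆ range N) (k : ℤ) :
    finsetFourier N A k = (N : ℂ)⁻¹ * expSum (cexp (2 * π * I / N)) A (-k) := by
  rw [finsetFourier, expSum]
  congr 1
  simp_rw [ite_mul, one_mul, zero_mul]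
  rw [sum_ite_mem, inter_eq_right.mpr hA]
  refine sum_congr rfl fun n _ => ?_
  rw [← Complex.exp_int_mul]
  push_cast
  ring_nf

theorem norm_expSum_eq_mul_norm_finsetFourier {N : ℕ} (hN : N ≠ 0) {A : Finset ℕ}
    (hA : A ⊆ range N) (k : ℤ) :
    ‖expSum (cexp (2 * π * I / N)) A k‖ = N * ‖finsetFourier N A k‖ := by
  rw [finsetFourier_eq_expSum hA, norm_mul, norm_inv, Complex.norm_natCast,
    norm_expSum_neg (Complex.isPrimitiveRoot_exp N hN) hN, mul_inv_cancel_left₀ (by positivity)]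

theorem add_eq_two_mul_of_dvd_sub {N x y z : ℕ} (hx : N ≤ 3 * x ∧ 3 * x < 2 * N) (hy : y < N)
    (hz : N ≤ 3 * z ∧ 3 * z < 2 * N) (h : (N : ℤ) ∣ x + y - 2 * z) : x + y = 2 * z := by
  have := Int.eq_zero_of_abs_lt_dvd h (by rw [abs_lt]; omega)
  omega

theorem exists_nontrivial_threeAP_of_card_lt {N : ℕ} {M A : Finset ℕ} (hA : A ⊆ range N)
    (hMA : M ⊆ A) (hmid : ∀ x ∈ M, N ≤ 3 * x ∧ 3 * x < 2 * N)
    (hcard : #M < #(threeAPsMod N M A M)) :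
    ∃ x ∈ A, ∃ y ∈ A, ∃ z ∈ A, x + y = 2 * z ∧ ¬(x = y ∧ y = z) := by
  obtain ⟨⟨x, y, z⟩, hp, hdiag⟩ := exists_mem_notMem_of_card_lt_card
    (card_image_le.trans_lt hcard : #(M.image fun x => (x, x, x)) < _)
  simp only [threeAPsMod, mem_filter, mem_product] at hp
  obtain ⟨⟨hx, hy, hz⟩, hdvd⟩ := hp
  refine ⟨x, hMA hx, y, hy, z, hMA hz,
    add_eq_two_mul_of_dvd_sub (hmid x hx) (mem_range.mp (hA hy)) (hmid z hz) hdvd, ?_⟩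
  rintro ⟨rfl, rfl⟩
  exact hdiag (mem_image_of_mem _ hx)

theorem add_error_lt_main_term {N α δ ε : ℝ} (hN : 1 ≤ N) (hδ : 0 < δ) (hε : 0 ≤ ε)
    (hlarge : 32 / δ ^ 2 < N ^ (2 * α - 1)) :
    N + N * (δ ^ 2 / 32 * N ^ (2 * α - 2 - ε)) * N < δ * N ^ α * (δ / 4 * N ^ α) := by
  have hN₀ : N ≠ 0 := by positivity
  have hlarge' : 32 < δ ^ 2 * N ^ (2 * α - 1) := by
    rwa [div_lt_iff₀ (by positivity), mul_comm] at hlarge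
  have hsq : N ^ α * N ^ α = N ^ (2 * α - 1) * N := by
    rw [← Real.rpow_add (by positivity), ← Real.rpow_add_one hN₀]
    ring_nf
  have herror : N ^ (2 * α - 2 - ε) * N * N ≤ N ^ (2 * α - 1) * N := by
    rw [← Real.rpow_add_one hN₀, ← Real.rpow_add_one hN₀, ← Real.rpow_add_one hN₀]
    exact Real.rpow_le_rpow_of_exponent_le hN (by linarith)
  have hNpos : 0 < N := by positivity
  calc N + N * (δ ^ 2 / 32 * N ^ (2 * α - 2 - ε)) * N
      = N + δ ^ 2 / 32 * (N ^ (2 * α - 2 - ε) * N * N) := by ring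
    _ ≤ N + δ ^ 2 / 32 * (N ^ (2 * α - 1) * N) := by gcongr
    _ < δ * N ^ α * (δ / 4 * N ^ α) := by
      rw [show δ * N ^ α * (δ / 4 * N ^ α) = δ ^ 2 / 4 * (N ^ α * N ^ α) by ring, hsq]
      nlinarith

theorem uniform_set_has_3AP_general (N : ℕ) (α δ ε : ℝ)
    (hδ : 0 < δ) (hε : 0 ≤ ε)
    (hN : 0 < N) (hodd : Odd N)
    (hNlarge : 32 / δ ^ 2 < (N : ℝ) ^ (2 * α - 1))
    (A : Finset ℕ) (hA : A ⊆ Finset.range N)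
    (hcard : (A.card : ℝ) = δ * (N : ℝ) ^ α)
    (M : Finset ℕ)
    (hM : M = A.filter (fun n : ℕ => (N : ℝ) / 3 ≤ (n : ℝ) ∧ (n : ℝ) < 2 * (N : ℝ) / 3))
    (hMcard : δ / 4 * (N : ℝ) ^ α ≤ (M.card : ℝ))
    (hFourier : ∀ k : ℕ, 1 ≤ k → k ≤ N - 1 →
      ‖finsetFourier N A k‖ ≤ δ ^ 2 / 32 * (N : ℝ) ^ (2 * α - 2 - ε)) :
    ∃ x ∈ A, ∃ y ∈ A, ∃ z ∈ A, x + y = 2 * z ∧ ¬(x = y ∧ y = z) := by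
  have hMA : M ⊆ A := hM ▸ filter_subset _ _
  have hmid : ∀ x ∈ M, N ≤ 3 * x ∧ 3 * x < 2 * N := by
    intro x hx
    obtain ⟨-, hlow, hhigh⟩ := mem_filter.mp (hM ▸ hx)
    have hlow' : (N : ℝ) ≤ 3 * x := by linarith
    have hhigh' : (3 * x : ℝ) < 2 * N := by linarith
    exact ⟨by exact_mod_cast hlow', by exact_mod_cast hhigh'⟩
  set β : ℝ := N * (δ ^ 2 / 32 * (N : ℝ) ^ (2 * α - 2 - ε))
  have hβ (k : ℕ) (hk : 0 < k) (hkN : k < N) :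
      ‖expSum (cexp (2 * π * I / N)) A k‖ ≤ β := by
    rw [norm_expSum_eq_mul_norm_finsetFourier hN.ne' hA]
    exact mul_le_mul_of_nonneg_left (hFourier k hk (by omega)) (Nat.cast_nonneg N)
  have herror := abs_natCast_mul_card_threeAPsMod_sub_le
    (Complex.isPrimitiveRoot_exp N hN.ne') hodd (hMA.trans hA) (by positivity) hβ
  have hlarge : (N : ℝ) + β * N < #A * #M :=
    (add_error_lt_main_term (by exact_mod_cast hN) hδ hε hNlarge).trans_le
      (by rw [← hcard]; gcongr)
  have hMpos : (0 : ℝ) < #M := (by positivity : (0 : ℝ) < δ / 4 * N ^ α).trans_le hMcard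
  have hcardlt : (N : ℝ) * #M < N * #(threeAPsMod N M A M) := by
    nlinarith [abs_le.mp herror]
  exact exists_nontrivial_threeAP_of_card_lt hA hMA hmid
    (by exact_mod_cast lt_of_mul_lt_mul_left hcardlt (Nat.cast_nonneg N))

/-- A set `A ⊆ {0,…,N-1}` of size `δN^α` (α > 1/2) whose middle third is substantial
and whose nonzero Fourier coefficients are all at most `δ²N^{2α-2-ε}/32` contains a
nontrivial 3-term arithmetic progression. -/
theorem uniform_set_has_3AP (N : ℕ) (α δ ε : ℝ)
    (hα₁ : 1/2 < α) (hα₂ : α ≤ 1) (hδ : 0 < δ) (hε : 0 ≤ ε)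
    (hN : 0 < N) (hodd : Odd N)
    (hNlarge : 32 / δ ^ 2 < (N : ℝ) ^ (2 * α - 1))
    (A : Finset ℕ) (hA : A ⊆ Finset.range N)
    (hcard : (A.card : ℝ) = δ * (N : ℝ) ^ α)
    (M : Finset ℕ)
    (hM : M = A.filter (fun n : ℕ => (N : ℝ) / 3 ≤ (n : ℝ) ∧ (n : ℝ) < 2 * (N : ℝ) / 3))
    (hMcard : δ / 4 * (N : ℝ) ^ α ≤ (M.card : ℝ))
    (hFourier : ∀ k : ℕ, 1 ≤ k → k ≤ N - 1 →
      ‖finsetFourier N A k‖ ≤ δ ^ 2 / 32 * (N : ℝ) ^ (2 * α - 2 - ε)) :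
    ∃ x ∈ A, ∃ y ∈ A, ∃ z ∈ A, x + y = 2 * z ∧ ¬(x = y ∧ y = z) :=
  uniform_set_has_3AP_general N α δ ε hδ hε hN hodd hNlarge A hA hcard M hM hMcard hFourier
end

section
/- Define subsets of ℕ by C₀ = {1}, C_{i+1} = C_i ∪ {3^{i+1} + 1 − c : c ∈ C_i} for i ∈ ℕ, and C = ⋃_{i=0}^∞ C_i. Then C has fractional density log 2 / log 3: for every β < log 2 / log 3, lim_{N→∞} |C ∩ [1, N]| / N^β = ∞, and for every β > log 2 / log 3, lim_{N→∞} |C ∩ [1, N]| / N^β = 0. -/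
/-!
The stage `C_i` consists of `2^i` points of `[1, 3^i]`, and the points of `C` in `[1, 3^i]` are
exactly those of `C_i`. Hence the counting function `A(N) = |C ∩ [1, N]|` is monotone with
`A(3^k) = 2^k`, and for `3^k ≤ N < 3^(k+1)` this pins `A(N)` between `N^α / 2` and `2 N^α`,
where `α = log 2 / log 3` is chosen so that `(3^k)^α = 2^k`.
-/

open Filter Finset

/-- The finite stages of the triadic Cantor set in `ℕ`:
`C₀ = {1}`, `C_{i+1} = C_i ∪ {3^{i+1} + 1 − c : c ∈ C_i}`. -/
def cantorStage : ℕ → Finset ℕ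
  | 0 => {1}
  | (i + 1) => cantorStage i ∪ (cantorStage i).image (fun c => 3 ^ (i + 1) + 1 - c)

/-- The triadic Cantor set in `ℕ`: `C = ⋃ᵢ Cᵢ`. -/
def natCantor : Set ℕ := ⋃ i : ℕ, (cantorStage i : Set ℕ)

open Topology

def HasFractionalDensity (A : Set ℕ) (α : ℝ) : Prop :=
  (∀ β : ℝ, β < α →
    Tendsto (fun N : ℕ => (Nat.card ↥(A ∩ Set.Icc 1 N) : ℝ) / (N : ℝ) ^ β) atTop atTop) ∧
  (∀ β : ℝ, α < β →
    Tendsto (fun N : ℕ => (Nat.card ↥(A ∩ Set.Icc 1 N) : ℝ) / (N : ℝ) ^ β) atTop (𝓝 0))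

section FractionalDensity

theorem tendsto_div_rpow_atTop_of_le {f : ℕ → ℝ} {c α β : ℝ} (hc : 0 < c) (hβ : β < α)
    (hf : ∀ᶠ N : ℕ in atTop, c * (N : ℝ) ^ α ≤ f N) :
    Tendsto (fun N : ℕ => f N / (N : ℝ) ^ β) atTop atTop := by
  have hlim : Tendsto (fun N : ℕ => c * (N : ℝ) ^ (α - β)) atTop atTop :=
    ((tendsto_rpow_atTop (sub_pos.2 hβ)).comp tendsto_natCast_atTop_atTop).const_mul_atTop hc
  refine tendsto_atTop_mono' _ ?_ hlim
  filter_upwards [hf, eventually_gt_atTop 0] with N hfN hN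
  have hN : (0 : ℝ) < N := Nat.cast_pos.2 hN
  rw [Real.rpow_sub hN, le_div_iff₀ (Real.rpow_pos_of_pos hN β), mul_assoc,
    div_mul_cancel₀ _ (Real.rpow_pos_of_pos hN β).ne']
  exact hfN

theorem tendsto_div_rpow_zero_of_le {f : ℕ → ℝ} {C α β : ℝ} (hβ : α < β)
    (hf₀ : ∀ N, 0 ≤ f N) (hf : ∀ᶠ N : ℕ in atTop, f N ≤ C * (N : ℝ) ^ α) :
    Tendsto (fun N : ℕ => f N / (N : ℝ) ^ β) atTop (𝓝 0) := by
  have hlim : Tendsto (fun N : ℕ => C * (N : ℝ) ^ (α - β)) atTop (𝓝 0) := by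
    simpa [neg_sub] using
      ((tendsto_rpow_neg_atTop (sub_pos.2 hβ)).comp tendsto_natCast_atTop_atTop).const_mul C
  refine tendsto_of_tendsto_of_tendsto_of_le_of_le' tendsto_const_nhds hlim
    (.of_forall fun N => div_nonneg (hf₀ N) (Real.rpow_nonneg N.cast_nonneg β)) ?_
  filter_upwards [hf, eventually_gt_atTop 0] with N hfN hN
  have hN : (0 : ℝ) < N := Nat.cast_pos.2 hN
  rw [Real.rpow_sub hN, mul_div_assoc']
  exact div_le_div_of_nonneg_right hfN (Real.rpow_nonneg hN.le β)

theorem hasFractionalDensity_of_le_of_le {A : Set ℕ} {α c C : ℝ} (hc : 0 < c)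
    (hlow : ∀ᶠ N : ℕ in atTop, c * (N : ℝ) ^ α ≤ Nat.card ↥(A ∩ Set.Icc 1 N))
    (hup : ∀ᶠ N : ℕ in atTop, (Nat.card ↥(A ∩ Set.Icc 1 N) : ℝ) ≤ C * (N : ℝ) ^ α) :
    HasFractionalDensity A α :=
  ⟨fun _ hβ => tendsto_div_rpow_atTop_of_le hc hβ hlow,
    fun _ hβ => tendsto_div_rpow_zero_of_le hβ (fun _ => Nat.cast_nonneg _) hup⟩

theorem card_inter_Icc_mono (A : Set ℕ) : Monotone fun N : ℕ => Nat.card ↥(A ∩ Set.Icc 1 N) :=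
  fun _ _ h => Nat.card_mono ((Set.finite_Icc _ _).inter_of_right A)
    (Set.inter_subset_inter_right A (Set.Icc_subset_Icc_right h))

variable {A : Set ℕ} {a b : ℕ}

theorem pow_eq_pow_rpow_logb (hb : 1 < b) (ha : 0 < a) (k : ℕ) :
    (a : ℝ) ^ k = ((b : ℝ) ^ k) ^ Real.logb b a := by
  have hb₀ : (0 : ℝ) ≤ b := b.cast_nonneg
  rw [← Real.rpow_natCast_mul hb₀, mul_comm, Real.rpow_mul_natCast hb₀,
    Real.rpow_logb (by positivity) (Nat.one_lt_cast.2 hb).ne' (Nat.cast_pos.2 ha)]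

theorem card_inter_Icc_rpow_bounds (hb : 1 < b) (ha : 0 < a)
    (hA : ∀ k, Nat.card ↥(A ∩ Set.Icc 1 (b ^ k)) = a ^ k) {N : ℕ} (hN : N ≠ 0) :
    (a : ℝ)⁻¹ * (N : ℝ) ^ Real.logb b a ≤ Nat.card ↥(A ∩ Set.Icc 1 N) ∧
      (Nat.card ↥(A ∩ Set.Icc 1 N) : ℝ) ≤ a * (N : ℝ) ^ Real.logb b a := by
  set k := Nat.log b N
  have hα : 0 ≤ Real.logb b a :=
    Real.logb_nonneg (Nat.one_lt_cast.2 hb) (Nat.one_le_cast.2 ha)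
  have ha' : (0 : ℝ) < a := Nat.cast_pos.2 ha
  have hlow : a ^ k ≤ Nat.card ↥(A ∩ Set.Icc 1 N) :=
    hA k ▸ card_inter_Icc_mono A (Nat.pow_log_le_self b hN)
  have hup : Nat.card ↥(A ∩ Set.Icc 1 N) ≤ a ^ (k + 1) :=
    hA (k + 1) ▸ card_inter_Icc_mono A (Nat.lt_pow_succ_log_self hb N).le
  constructor
  · rw [inv_mul_le_iff₀ ha']
    calc (N : ℝ) ^ Real.logb b a ≤ ((b : ℝ) ^ (k + 1)) ^ Real.logb b a := by
          gcongr
          exact_mod_cast (Nat.lt_pow_succ_log_self hb N).le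
      _ = a * a ^ k := by rw [← pow_eq_pow_rpow_logb hb ha, pow_succ']
      _ ≤ a * Nat.card ↥(A ∩ Set.Icc 1 N) := by gcongr; exact_mod_cast hlow
  · calc (Nat.card ↥(A ∩ Set.Icc 1 N) : ℝ) ≤ a * a ^ k := by
          rw [← pow_succ']; exact_mod_cast hup
      _ = a * ((b : ℝ) ^ k) ^ Real.logb b a := by rw [pow_eq_pow_rpow_logb hb ha]
      _ ≤ a * (N : ℝ) ^ Real.logb b a := by
          gcongr
          exact_mod_cast Nat.pow_log_le_self b hN

theorem hasFractionalDensity_of_card_inter_Icc_pow (hb : 1 < b) (ha : 0 < a)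
    (hA : ∀ k, Nat.card ↥(A ∩ Set.Icc 1 (b ^ k)) = a ^ k) :
    HasFractionalDensity A (Real.logb b a) :=
  hasFractionalDensity_of_le_of_le (inv_pos.2 (Nat.cast_pos.2 ha))
    ((eventually_ne_atTop 0).mono fun _ hN => (card_inter_Icc_rpow_bounds hb ha hA hN).1)
    ((eventually_ne_atTop 0).mono fun _ hN => (card_inter_Icc_rpow_bounds hb ha hA hN).2)

end FractionalDensity

theorem cantorStage_subset_Icc (i : ℕ) : cantorStage i ⊆ Finset.Icc 1 (3 ^ i) := by
  induction i with
  | zero => simp [cantorStage]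
  | succ i ih =>
    intro c hc
    simp only [cantorStage, Finset.mem_union, Finset.mem_image] at hc
    rw [Finset.mem_Icc, pow_succ]
    rcases hc with hc | ⟨d, hd, rfl⟩
    · have := Finset.mem_Icc.1 (ih hc); omega
    · have := Finset.mem_Icc.1 (ih hd); omega

theorem cantorStage_mono : Monotone cantorStage :=
  monotone_nat_of_le_succ fun _ => Finset.subset_union_left

theorem card_cantorStage (i : ℕ) : (cantorStage i).card = 2 ^ i := by
  induction i with
  | zero => rfl
  | succ i ih =>
    have hbounds {c} (hc : c ∈ cantorStage i) : 1 ≤ c ∧ c ≤ 3 ^ i :=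
      Finset.mem_Icc.1 (cantorStage_subset_Icc i hc)
    have hpow : 3 ^ (i + 1) = 3 * 3 ^ i := pow_succ' 3 i
    rw [cantorStage, Finset.card_union_of_disjoint, Finset.card_image_of_injOn, ih, pow_succ]
    · ring
    · intro c hc d hd hcd
      have := hbounds hc; have := hbounds hd
      simp only at hcd; omega
    · rw [Finset.disjoint_right]
      rintro _ hc' hc
      obtain ⟨d, hd, rfl⟩ := Finset.mem_image.1 hc'
      have := hbounds hc; have := hbounds hd
      omega

-- Points added at stage `j + 1` exceed `2 * 3^j`, so they never fall back into `[1, 3^i]`.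
theorem mem_cantorStage_of_le_pow {i j c : ℕ} (hij : i ≤ j) (hc : c ∈ cantorStage j)
    (hci : c ≤ 3 ^ i) : c ∈ cantorStage i := by
  induction j, hij using Nat.le_induction with
  | base => exact hc
  | succ j hij ih =>
    simp only [cantorStage, Finset.mem_union, Finset.mem_image] at hc
    rcases hc with hc | ⟨d, hd, rfl⟩
    · exact ih hc
    · have := Finset.mem_Icc.1 (cantorStage_subset_Icc j hd)
      have := Nat.pow_le_pow_right (show 0 < 3 by norm_num) hij
      have := pow_succ' 3 j
      omega

theorem natCantor_inter_Icc_pow (i : ℕ) : natCantor ∩ Set.Icc 1 (3 ^ i) = cantorStage i := by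
  ext c
  simp only [natCantor, Set.mem_inter_iff, Set.mem_iUnion, Finset.mem_coe]
  constructor
  · rintro ⟨⟨j, hc⟩, -, hci⟩
    rcases le_total i j with hij | hji
    · exact mem_cantorStage_of_le_pow hij hc hci
    · exact cantorStage_mono hji hc
  · intro hc
    exact ⟨⟨i, hc⟩, by simpa using cantorStage_subset_Icc i hc⟩

theorem card_natCantor_inter_Icc_pow (i : ℕ) :
    Nat.card ↥(natCantor ∩ Set.Icc 1 (3 ^ i)) = 2 ^ i := by
  rw [natCantor_inter_Icc_pow, Nat.card_coe_set_eq, Set.ncard_coe_finset, card_cantorStage]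

/-- The triadic Cantor set in `ℕ` has fractional density `log 2 / log 3`. -/
theorem natCantor_fractional_density :
    (∀ β : ℝ, β < Real.log 2 / Real.log 3 →
      Tendsto (fun N : ℕ => (Nat.card ↥(natCantor ∩ Set.Icc 1 N) : ℝ) / (N : ℝ) ^ β)
        atTop atTop) ∧
    (∀ β : ℝ, Real.log 2 / Real.log 3 < β →
      Tendsto (fun N : ℕ => (Nat.card ↥(natCantor ∩ Set.Icc 1 N) : ℝ) / (N : ℝ) ^ β)
        atTop (nhds 0)) := by
  have h := hasFractionalDensity_of_card_inter_Icc_pow (by norm_num) (by norm_num)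
    card_natCantor_inter_Icc_pow
  rwa [Nat.cast_ofNat, Nat.cast_ofNat, ← Real.log_div_log] at h
end
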